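/- Let d ≥ 0 and let K have characteristic zero or odd prime characteristic greater than d. Let A ∈ Mat_{d+1}(K) be lower bidiagonal with A_{ii} = d - 2i and A_{i,i-1} = -i, and let A* be upper bidiagonal with A*_{ii} = d - 2i and A*_{i-1,i} = 2(d - i + 1). Then A, A* is a Leonard pair in Mat_{d+1}(K). -/

import Mathlib

open Polynomial Matrix Finset

variable {K : Type*} [Field K]

/-- The primitive idempotent of `A` associated with eigenvalue `θ i`:
`E i = ∏_{j ≠ i} (A - θ j • 1) / (θ i - θ j)`. -/
noncomputable def primIdem {d : ℕ} (A : Matrix (Fin (d + 1)) (Fin (d + 1)) K)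
    (θ : Fin (d + 1) → K) (i : Fin (d + 1)) : Matrix (Fin (d + 1)) (Fin (d + 1)) K :=
  Polynomial.aeval A
    (∏ j ∈ Finset.univ.erase i,
      (Polynomial.C (θ i - θ j)⁻¹ * (Polynomial.X - Polynomial.C (θ j))))

/-- `A` is multiplicity-free with (distinct) eigenvalues `θ 0, …, θ d`. -/
def MultFreeWith {d : ℕ} (A : Matrix (Fin (d + 1)) (Fin (d + 1)) K)
    (θ : Fin (d + 1) → K) : Prop :=
  Function.Injective θ ∧ A.charpoly = ∏ i, (Polynomial.X - Polynomial.C (θ i))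

/-- `θ` is an eigenvalue sequence for the (ordered) pair `A, B`: the corresponding
ordering of the primitive idempotents of `A` is an idempotent sequence for `A, B`. -/
def IsEigenvalueSeq {d : ℕ} (A B : Matrix (Fin (d + 1)) (Fin (d + 1)) K)
    (θ : Fin (d + 1) → K) : Prop :=
  MultFreeWith A θ ∧
    ∀ i j : Fin (d + 1),
      (1 < |((i : ℕ) : ℤ) - ((j : ℕ) : ℤ)| → primIdem A θ i * B * primIdem A θ j = 0) ∧
      (|((i : ℕ) : ℤ) - ((j : ℕ) : ℤ)| = 1 → primIdem A θ i * B * primIdem A θ j ≠ 0)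

/-- `A, B` is a Leonard pair in `Mat_{d+1}(K)`. -/
def IsLeonardPair {d : ℕ} (A B : Matrix (Fin (d + 1)) (Fin (d + 1)) K) : Prop :=
  (∃ θ, IsEigenvalueSeq A B θ) ∧ (∃ θs, IsEigenvalueSeq B A θs)

/-!
Put `θ i = d - 2 i`. The matrix `P` with `P i j = (i choose j) (-2)^(d-i)` satisfies
`A P = P diag θ` and `A* P = P T` with `T` irreducible tridiagonal. The primitive idempotents of a
diagonal matrix with distinct entries are the matrix units `E i i`, and `E i i T E j j = T i j E i j`,
so `θ` is an eigenvalue sequence for `diag θ, T`, hence for `A, A*`.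

For the other half, the diagonal matrix `W = diag ((-2)^(d-i) i! (d-i)!)` satisfies `A* W = W Aᵀ`
and `A W = W A*ᵀ`: the anti-automorphism `M ↦ W Mᵀ W⁻¹` swaps `A` and `A*`, and eigenvalue
sequences are preserved by transposition and by conjugation.
-/

lemma Matrix.aeval_transpose {R n : Type*} [CommSemiring R] [Fintype n] [DecidableEq n]
    (M : Matrix n n R) (q : R[X]) : aeval Mᵀ q = (aeval M q)ᵀ := by
  have := aeval_algHom_apply (transposeAlgEquiv n R R) M q
  rw [transposeAlgEquiv_apply, transposeAlgEquiv_apply, aeval_op_apply] at this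
  exact MulOpposite.op_injective this

lemma Matrix.aeval_units_conj {R n : Type*} [CommSemiring R] [Fintype n] [DecidableEq n]
    (U : (Matrix n n R)ˣ) (M : Matrix n n R) (q : R[X]) :
    aeval (U.val * M * U⁻¹.val) q = U.val * aeval M q * U⁻¹.val := by
  simpa [ConjAct.units_smul_def] using
    aeval_algHom_apply (MulSemiringAction.toAlgEquiv R _ (ConjAct.toConjAct U)) M q

lemma Matrix.aeval_diagonal {R n : Type*} [CommSemiring R] [Fintype n] [DecidableEq n]
    (v : n → R) (q : R[X]) : aeval (diagonal v) q = diagonal fun i => q.eval (v i) := by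
  simpa [aeval_pi_apply] using aeval_algHom_apply (diagonalAlgHom R : (n → R) →ₐ[R] _) v q

lemma Matrix.single_eq_zero_iff {α m n : Type*} [Zero α] [DecidableEq m] [DecidableEq n]
    (i : m) (j : n) (c : α) : single i j c = 0 ↔ c = 0 :=
  ⟨fun h => by simpa using congrFun (congrFun h i) j, fun h => h ▸ single_zero i j⟩

section LeonardPair

variable {d : ℕ} {A B A' B' : Matrix (Fin (d + 1)) (Fin (d + 1)) K} {θ : Fin (d + 1) → K}

def IsIrreducibleTridiagonal (T : Matrix (Fin (d + 1)) (Fin (d + 1)) K) : Prop :=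
  ∀ i j : Fin (d + 1),
    (1 < |((i : ℕ) : ℤ) - ((j : ℕ) : ℤ)| → T i j = 0) ∧
      (|((i : ℕ) : ℤ) - ((j : ℕ) : ℤ)| = 1 → T i j ≠ 0)

lemma primIdem_eq_aeval_basis (i : Fin (d + 1)) :
    primIdem A θ i = aeval A (Lagrange.basis univ θ i) := rfl

lemma primIdem_transpose (i : Fin (d + 1)) : primIdem Aᵀ θ i = (primIdem A θ i)ᵀ :=
  aeval_transpose A _

lemma primIdem_units_conj (U : (Matrix (Fin (d + 1)) (Fin (d + 1)) K)ˣ) (i : Fin (d + 1)) :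
    primIdem (U.val * A * U⁻¹.val) θ i = U.val * primIdem A θ i * U⁻¹.val :=
  aeval_units_conj U A _

lemma primIdem_diagonal (hθ : Function.Injective θ) (i : Fin (d + 1)) :
    primIdem (diagonal θ) θ i = single i i 1 := by
  rw [primIdem_eq_aeval_basis, aeval_diagonal]
  ext k l
  by_cases hki : k = i
  · subst hki
    simp [diagonal_apply, single_apply, Lagrange.eval_basis_self hθ.injOn (mem_univ k)]
  · simp [diagonal_apply, Lagrange.eval_basis_of_ne (Ne.symm hki) (mem_univ k),
      Ne.symm hki]

lemma isEigenvalueSeq_diagonal {T : Matrix (Fin (d + 1)) (Fin (d + 1)) K}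
    (hθ : Function.Injective θ) (hT : IsIrreducibleTridiagonal T) :
    IsEigenvalueSeq (diagonal θ) T θ := by
  refine ⟨⟨hθ, charpoly_diagonal θ⟩, fun i j => ?_⟩
  simp only [primIdem_diagonal hθ, single_mul_mul_single, one_mul, mul_one, ne_eq,
    single_eq_zero_iff]
  exact hT i j

lemma IsEigenvalueSeq.transpose (h : IsEigenvalueSeq A B θ) : IsEigenvalueSeq Aᵀ Bᵀ θ := by
  refine ⟨⟨h.1.1, (charpoly_transpose A).trans h.1.2⟩, fun i j => ?_⟩
  have hE : primIdem Aᵀ θ i * Bᵀ * primIdem Aᵀ θ j =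
      (primIdem A θ j * B * primIdem A θ i)ᵀ := by
    simp only [primIdem_transpose, transpose_mul, mul_assoc]
  simp only [hE, ne_eq, transpose_eq_zero, abs_sub_comm (i : ℤ)]
  exact h.2 j i

lemma IsEigenvalueSeq.of_mul_eq_mul (h : IsEigenvalueSeq A B θ)
    {P : Matrix (Fin (d + 1)) (Fin (d + 1)) K} (hP : IsUnit P)
    (hA : A' * P = P * A) (hB : B' * P = P * B) : IsEigenvalueSeq A' B' θ := by
  obtain ⟨U, rfl⟩ := hP
  have conj {M M' : Matrix (Fin (d + 1)) (Fin (d + 1)) K} (hM : M' * U = U * M) :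
      M' = U * M * U⁻¹.val := by
    rw [← hM, mul_assoc, Units.mul_inv, mul_one]
  obtain rfl := conj hA
  obtain rfl := conj hB
  refine ⟨⟨h.1.1, by rw [coe_units_inv]; exact (charpoly_units_conj U A).trans h.1.2⟩,
    fun i j => ?_⟩
  have hE : primIdem (U.val * A * U⁻¹.val) θ i * (U.val * B * U⁻¹.val) *
      primIdem (U.val * A * U⁻¹.val) θ j =
        U.val * (primIdem A θ i * B * primIdem A θ j) * U⁻¹.val := by
    rw [primIdem_units_conj, primIdem_units_conj]
    simp only [mul_assoc, Units.inv_mul_cancel_left]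
  simp only [hE, ne_eq, Units.mul_left_eq_zero, Units.mul_right_eq_zero]
  exact h.2 i j

end LeonardPair

lemma Nat.cast_choose_mul_succ {R : Type*} [CommRing R] (m j : ℕ) :
    (m.choose j : R) * (m + 1) = ((m + 1).choose j : R) * (m + 1 - j) := by
  rcases le_or_gt j (m + 1) with hj | hj
  · have := congrArg (Nat.cast : ℕ → R) (Nat.choose_mul_succ_eq m j)
    push_cast [Nat.cast_sub hj] at this
    exact this
  · rw [Nat.choose_eq_zero_of_lt hj, Nat.choose_eq_zero_of_lt (by omega)]
    ring

lemma Nat.cast_choose_succ_right_mul {R : Type*} [CommRing R] (m j : ℕ) :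
    (m.choose (j + 1) : R) * (j + 1) = (m.choose j : R) * (m - j) := by
  rcases le_or_gt j m with hj | hj
  · have := congrArg (Nat.cast : ℕ → R) (Nat.choose_succ_right_eq m j)
    push_cast [Nat.cast_sub hj] at this
    exact this
  · rw [Nat.choose_eq_zero_of_lt hj, Nat.choose_eq_zero_of_lt (by omega)]
    ring

lemma Finset.sum_range_succ_of_eq_zero {M : Type*} [AddCommMonoid M] {f : ℕ → M} {n : ℕ}
    (h : f n = 0) : ∑ x ∈ range (n + 1), f x = ∑ x ∈ range n, f x := by
  rw [sum_range_succ, h, add_zero]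

namespace Matrix

def ofNatFn {α : Type*} (n : ℕ) (f : ℕ → ℕ → α) : Matrix (Fin n) (Fin n) α :=
  of fun i j => f i j

variable {α : Type*} {n : ℕ} {f g : ℕ → ℕ → α}

lemma ofNatFn_mul_ofNatFn [NonUnitalNonAssocSemiring α] :
    ofNatFn n f * ofNatFn n g = ofNatFn n fun i j => ∑ l ∈ range n, f i l * g l j := by
  ext i j
  simp only [ofNatFn, mul_apply, of_apply]
  exact Fin.sum_univ_eq_sum_range (fun l => f i l * g l j) n

lemma ofNatFn_congr (h : ∀ i < n, ∀ j < n, f i j = g i j) : ofNatFn n f = ofNatFn n g := by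
  ext ⟨i, hi⟩ ⟨j, hj⟩
  exact h i hi j hj

end Matrix

lemma two_ne_zero_and_factorial_ne_zero {d : ℕ}
    (hchar : CharZero K ∨ ∃ p, p.Prime ∧ Odd p ∧ d < p ∧ CharP K p) :
    (2 : K) ≠ 0 ∧ (d.factorial : K) ≠ 0 := by
  rcases hchar with hK | ⟨p, hp, hodd, hdp, hK⟩
  · exact ⟨two_ne_zero, Nat.cast_ne_zero.mpr d.factorial_ne_zero⟩
  · refine ⟨fun h2 => ?_, fun hd => ?_⟩
    · have hp2 : p ∣ 2 := (CharP.cast_eq_zero_iff K p 2).mp (by exact_mod_cast h2)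
      rw [(Nat.prime_dvd_prime_iff_eq hp Nat.prime_two).mp hp2] at hodd
      exact absurd hodd (by decide)
    · have := hp.dvd_factorial.mp ((CharP.cast_eq_zero_iff K p _).mp hd)
      omega

section FactorialNeZero

variable {R : Type*} [Ring R] {d : ℕ} (hd : (d.factorial : R) ≠ 0)
include hd

lemma natCast_ne_zero_of_factorial_ne_zero {m : ℕ} (hm : 0 < m) (hmd : m ≤ d) : (m : R) ≠ 0 :=
  ne_zero_of_dvd_ne_zero hd (Nat.cast_dvd_cast (Nat.dvd_factorial hm hmd))

lemma natCast_inj_of_factorial_ne_zero {i j : ℕ} (hi : i ≤ d) (hj : j ≤ d) (h : (i : R) = j) :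
    i = j := by
  wlog hij : i ≤ j generalizing i j
  · exact (this hj hi h.symm (by omega)).symm
  by_contra hne
  have hsub : ((j - i : ℕ) : R) = 0 := by rw [Nat.cast_sub hij, h, sub_self]
  exact natCast_ne_zero_of_factorial_ne_zero hd (by omega) (by omega) hsub

end FactorialNeZero

namespace LBUB

variable (K) (d : ℕ)

def A : Matrix (Fin (d + 1)) (Fin (d + 1)) K :=
  ofNatFn (d + 1) fun i j => if i = j then (d : K) - 2 * (i : K)
      else if i = j + 1 then -(i : K)
      else 0

def Astar : Matrix (Fin (d + 1)) (Fin (d + 1)) K :=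
  ofNatFn (d + 1) fun i j => if i = j then (d : K) - 2 * (i : K)
      else if j = i + 1 then 2 * ((d : K) - (j : K) + 1)
      else 0

def θ (i : Fin (d + 1)) : K := d - 2 * (i : ℕ)

def P : Matrix (Fin (d + 1)) (Fin (d + 1)) K :=
  ofNatFn (d + 1) fun i j => (i.choose j : K) * (-2) ^ (d - i)

def T : Matrix (Fin (d + 1)) (Fin (d + 1)) K :=
  ofNatFn (d + 1) fun i j => if i + 1 = j then -((d : K) - i)
      else if i = j + 1 then -(i : K)
      else 0

def W : Matrix (Fin (d + 1)) (Fin (d + 1)) K :=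
  diagonal fun i => (-2) ^ (d - i) * ((i : ℕ).factorial * (d - i).factorial : ℕ)

variable {K d}

lemma A_mul_P : A K d * P K d = P K d * diagonal (θ K d) := by
  ext ⟨k, hk⟩ ⟨j, hj⟩
  rw [mul_diagonal, A, P, ofNatFn_mul_ofNatFn]
  simp only [ofNatFn, of_apply, θ]
  rcases k with _ | m
  · rw [Finset.sum_eq_single_of_mem 0 (by simp) (fun l _ hl => by simp [Ne.symm hl])]
    rcases j with _ | j <;> simp [mul_comm]
  · rw [Finset.sum_eq_add_of_mem m (m + 1) (by simp; omega) (by simp; omega) (by omega)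
      (fun l _ hl => by simp [hl.1.symm, hl.2.symm])]
    simp only [if_true, if_neg (show m + 1 ≠ m by omega)]
    rw [show d - m = d - (m + 1) + 1 by omega, pow_succ]
    push_cast
    linear_combination (2 * (-2 : K) ^ (d - (m + 1))) * Nat.cast_choose_mul_succ (R := K) m j

lemma choose_recurrence (d k m : ℕ) :
    ((d : K) - 2 * k) * k.choose (m + 1) - ((d : K) - k) * (k + 1).choose (m + 1) =
      -((d : K) - m) * k.choose m - (m + 2) * k.choose (m + 2) := by
  have pascal : ((k + 1).choose (m + 1) : K) = k.choose m + k.choose (m + 1) := by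
    rw [Nat.choose_succ_succ', Nat.cast_add]
  have h1 := Nat.cast_choose_succ_right_mul (R := K) k m
  have h2 := Nat.cast_choose_succ_right_mul (R := K) k (m + 1)
  push_cast at h2
  linear_combination -((d : K) - k) * pascal + h2 - h1

lemma Astar_mul_P : Astar K d * P K d = P K d * T K d := by
  rw [Astar, P, T, ofNatFn_mul_ofNatFn, ofNatFn_mul_ofNatFn]
  refine ofNatFn_congr fun k hk j hj => ?_
  -- The terms `l = d + 1` vanish; adding them removes the boundary cases `k = d` and `j = d`.
  rw [← Finset.sum_range_succ_of_eq_zero (n := d + 1)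
      (by rw [if_neg (by omega)]; split_ifs <;> push_cast <;> ring),
    ← Finset.sum_range_succ_of_eq_zero (n := d + 1) (by simp [Nat.choose_eq_zero_of_lt hk])]
  rw [Finset.sum_eq_add_of_mem k (k + 1) (by simp; omega) (by simp; omega) (by omega)
      (fun l _ hl => by simp [Ne.symm hl.1, hl.2])]
  simp only [if_true, if_neg (show k ≠ k + 1 by omega)]
  have hpow : 2 * ((d : K) - (k + 1) + 1) * (-2) ^ (d - (k + 1)) =
      -((d : K) - k) * (-2) ^ (d - k) := by
    rcases Nat.lt_succ_iff_lt_or_eq.mp hk with hk | rfl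
    · rw [show d - k = d - (k + 1) + 1 by omega, pow_succ]
      ring
    · ring
  rcases j with _ | m
  · rw [Finset.sum_eq_single_of_mem 1 (by simp) (fun l _ hl => by simp [hl])]
    simp only [Nat.choose_zero_right, Nat.choose_one_right]
    norm_num
    linear_combination hpow
  · rw [Finset.sum_eq_add_of_mem m (m + 2) (by simp; omega) (by simp; omega) (by omega)
      (fun l _ hl => by simp [hl.1, hl.2])]
    simp only [if_true, if_neg (show m + 2 + 1 ≠ m + 1 by omega)]
    push_cast
    linear_combination ((k + 1).choose (m + 1) : K) * hpow +
      (-2 : K) ^ (d - k) * choose_recurrence (K := K) d k m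

lemma Astar_mul_W : Astar K d * W K d = W K d * (A K d)ᵀ := by
  ext ⟨k, hk⟩ ⟨l, hl⟩
  simp only [mul_diagonal, diagonal_mul, transpose_apply, Astar, A, W, ofNatFn, of_apply]
  by_cases hkl : k = l
  · subst hkl
    simp only [if_true]
    ring
  by_cases hlk : l = k + 1
  · subst hlk
    obtain ⟨r, rfl⟩ : ∃ r, d = k + 1 + r := ⟨d - (k + 1), by omega⟩
    simp only [if_neg hkl, if_neg (show k + 1 ≠ k by omega), if_true,
      show k + 1 + r - (k + 1) = r by omega, show k + 1 + r - k = r + 1 by omega,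
      Nat.factorial_succ]
    push_cast
    ring
  · simp [hkl, hlk, Ne.symm hkl]

lemma A_mul_W : A K d * W K d = W K d * (Astar K d)ᵀ := by
  have hWt : (W K d)ᵀ = W K d := diagonal_transpose _
  simpa [transpose_mul, hWt] using congrArg transpose (Astar_mul_W (K := K) (d := d)).symm

lemma isUnit_P (h2 : (2 : K) ≠ 0) : IsUnit (P K d) := by
  have hP : (P K d).IsLowerTriangular := fun i j hij => by
    simp [P, ofNatFn, Nat.choose_eq_zero_of_lt (show (i : ℕ) < j from hij)]
  rw [isUnit_iff_isUnit_det, det_of_isLowerTriangular _ hP, isUnit_iff_ne_zero,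
    prod_ne_zero_iff]
  intro i _
  simpa [P, ofNatFn] using pow_ne_zero _ (neg_ne_zero.mpr h2)

lemma isUnit_W (h2 : (2 : K) ≠ 0) (hd : (d.factorial : K) ≠ 0) : IsUnit (W K d) := by
  rw [isUnit_iff_isUnit_det, W, det_diagonal, isUnit_iff_ne_zero, prod_ne_zero_iff]
  intro i _
  refine mul_ne_zero (pow_ne_zero _ (neg_ne_zero.mpr h2)) (ne_zero_of_dvd_ne_zero hd ?_)
  exact Nat.cast_dvd_cast (Nat.factorial_mul_factorial_dvd_factorial (by omega))

lemma θ_injective (h2 : (2 : K) ≠ 0) (hd : (d.factorial : K) ≠ 0) :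
    Function.Injective (θ K d) := by
  intro i j h
  have h' : ((i : ℕ) : K) = (j : ℕ) := mul_left_cancel₀ h2 (by simpa [θ] using h)
  exact Fin.ext (natCast_inj_of_factorial_ne_zero hd (by omega) (by omega) h')

lemma T_isIrreducibleTridiagonal (hd : (d.factorial : K) ≠ 0) :
    IsIrreducibleTridiagonal (T K d) := by
  intro i j
  simp only [T, ofNatFn, of_apply]
  constructor
  · intro h
    rcases lt_abs.mp h with h | h <;> rw [if_neg (by omega), if_neg (by omega)]
  · intro h
    rcases abs_eq (zero_le_one' ℤ) |>.mp h with h | h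
    · rw [if_neg (by omega), if_pos (by omega), neg_ne_zero]
      exact natCast_ne_zero_of_factorial_ne_zero hd (by omega) (by omega)
    · rw [if_pos (by omega), neg_ne_zero, ← Nat.cast_sub (by omega)]
      exact natCast_ne_zero_of_factorial_ne_zero hd (by omega) (by omega)

end LBUB

/-- an explicit lower bidiagonal / upper bidiagonal Leonard pair. -/
theorem example_lbub_leonard_pair {d : ℕ}
    (hchar : CharZero K ∨ ∃ p, p.Prime ∧ Odd p ∧ d < p ∧ CharP K p)
    (A Astar : Matrix (Fin (d + 1)) (Fin (d + 1)) K)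
    (hA : ∀ i j : Fin (d + 1), A i j =
      if (i : ℕ) = (j : ℕ) then (d : K) - 2 * ((i : ℕ) : K)
      else if (i : ℕ) = (j : ℕ) + 1 then -((i : ℕ) : K)
      else 0)
    (hAs : ∀ i j : Fin (d + 1), Astar i j =
      if (i : ℕ) = (j : ℕ) then (d : K) - 2 * ((i : ℕ) : K)
      else if (j : ℕ) = (i : ℕ) + 1 then 2 * ((d : K) - ((j : ℕ) : K) + 1)
      else 0) :
    IsLeonardPair A Astar := by
  obtain ⟨h2, hd⟩ := two_ne_zero_and_factorial_ne_zero hchar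
  obtain rfl : A = LBUB.A K d := Matrix.ext hA
  obtain rfl : Astar = LBUB.Astar K d := Matrix.ext hAs
  have hAAs : IsEigenvalueSeq (LBUB.A K d) (LBUB.Astar K d) (LBUB.θ K d) :=
    (isEigenvalueSeq_diagonal (LBUB.θ_injective h2 hd) (LBUB.T_isIrreducibleTridiagonal hd)
      ).of_mul_eq_mul (LBUB.isUnit_P h2) LBUB.A_mul_P LBUB.Astar_mul_P
  exact ⟨⟨_, hAAs⟩, ⟨_, hAAs.transpose.of_mul_eq_mul (LBUB.isUnit_W h2 hd) LBUB.Astar_mul_W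
    LBUB.A_mul_W⟩⟩
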